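/- Any unit normal vector to the plane containing a nondegenerate equilateral triangle whose three vertices lie in ℤ³ is of the form (a,b,c)/(d√3) for some integers a, b, c, d with a²+b²+c²=3d² and d ≠ 0. -/

import Mathlib

/-- Casting a vector of integers to a point of `ℝ³` (with the Euclidean structure). -/
noncomputable def intVec (v : Fin 3 → ℤ) : EuclideanSpace ℝ (Fin 3) :=
  (WithLp.equiv 2 (Fin 3 → ℝ)).symm fun i => (v i : ℝ)

/-!
Put `u = B - A` and `v = C - A`. The triangle is equilateral iff `|u|² = |v|² = |v - u|²`, which
gives `|u|² = |v|² = 2 u·v`; Lagrange's identity then yields `|u × v|² = 3 (u·v)²`. A unit vector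
orthogonal to `u` and `v` is `±(u × v)/|u × v|`, i.e. `(u × v)/(d√3)` with `d = ±u·v`.
-/

open Matrix

section DotProduct

variable {R ι : Type*} [CommRing R] [Fintype ι] {u v : ι → R}

theorem dotProduct_self_eq_two_mul_of_sub_dotProduct_sub_eq
    (h : (v - u) ⬝ᵥ (v - u) = v ⬝ᵥ v) : u ⬝ᵥ u = 2 * (u ⬝ᵥ v) := by
  simp only [sub_dotProduct, dotProduct_sub, dotProduct_comm v u] at h
  linear_combination h

theorem dotProduct_ne_zero_of_sub_dotProduct_sub_eq [LinearOrder R] [IsStrictOrderedRing R]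
    (hu : u ≠ 0) (h : (v - u) ⬝ᵥ (v - u) = v ⬝ᵥ v) : u ⬝ᵥ v ≠ 0 := by
  intro huv
  have huu := dotProduct_self_eq_two_mul_of_sub_dotProduct_sub_eq h
  rw [huv, mul_zero, dotProduct_self_eq_zero] at huu
  exact hu huu

end DotProduct

section CrossProduct

variable {R : Type*} [CommRing R]

theorem RingHom.comp_cross {S : Type*} [CommRing S] (f : R →+* S) (u v : Fin 3 → R) :
    f ∘ (u ⨯₃ v) = (f ∘ u) ⨯₃ (f ∘ v) := by
  ext i
  fin_cases i <;> simp [cross_apply]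

theorem dotProduct_cross_self_smul_eq (n u v : Fin 3 → R) (hu : n ⬝ᵥ u = 0) (hv : n ⬝ᵥ v = 0) :
    (u ⨯₃ v ⬝ᵥ u ⨯₃ v) • n = (n ⬝ᵥ u ⨯₃ v) • u ⨯₃ v := by
  have hcross : n ⨯₃ (u ⨯₃ v) = 0 := by
    rw [cross_cross_eq_smul_sub_smul', hv, dotProduct_comm, hu, zero_smul, zero_smul, sub_zero]
  have h := cross_cross_eq_smul_sub_smul' (u ⨯₃ v) n (u ⨯₃ v)
  rw [hcross, map_zero] at h
  exact sub_eq_zero.mp h.symm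

theorem cross_dotProduct_cross_self_of_equilateral {u v : Fin 3 → R}
    (h₁ : u ⬝ᵥ u = (v - u) ⬝ᵥ (v - u)) (h₂ : (v - u) ⬝ᵥ (v - u) = v ⬝ᵥ v) :
    u ⨯₃ v ⬝ᵥ u ⨯₃ v = 3 * (u ⬝ᵥ v) ^ 2 := by
  have hu := dotProduct_self_eq_two_mul_of_sub_dotProduct_sub_eq h₂
  have hv : v ⬝ᵥ v = 2 * (u ⬝ᵥ v) := hu ▸ (h₁.trans h₂).symm
  rw [cross_dot_cross, hu, hv, dotProduct_comm v u]
  ring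

end CrossProduct

theorem eq_inv_smul_of_smul_eq {K ι : Type*} [Field K] [Fintype ι] {n w : ι → K} {N : K}
    (h : (w ⬝ᵥ w) • n = N • w) (hn : n ⬝ᵥ n = 1) (hw : w ⬝ᵥ w ≠ 0) :
    N ^ 2 = w ⬝ᵥ w ∧ n = N⁻¹ • w := by
  have hnw : n ⬝ᵥ w = N := by
    have h' := congrArg (· ⬝ᵥ w) h
    simp only [smul_dotProduct, smul_eq_mul, mul_comm _ (w ⬝ᵥ w)] at h'
    exact mul_left_cancel₀ hw h'
  have hN : N ^ 2 = w ⬝ᵥ w := by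
    have h' := congrArg (· ⬝ᵥ n) h
    simp only [smul_dotProduct, smul_eq_mul, hn, dotProduct_comm w n, hnw] at h'
    linear_combination -h'
  have hN₀ : N ≠ 0 := by
    rintro rfl
    exact hw (by simpa using hN.symm)
  refine ⟨hN, ?_⟩
  rw [← hN] at h
  calc n = (N ^ 2)⁻¹ • (N ^ 2 • n) := (inv_smul_smul₀ (pow_ne_zero 2 hN₀) n).symm
    _ = N⁻¹ • w := by rw [h, smul_smul]; congr 1; field_simp

theorem exists_int_eq_mul_sqrt_three {N : ℝ} {t : ℤ} (h : N ^ 2 = 3 * (t : ℝ) ^ 2) :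
    ∃ d : ℤ, d ^ 2 = t ^ 2 ∧ N = d * √3 := by
  rw [show 3 * (t : ℝ) ^ 2 = (t * √3) ^ 2 by rw [mul_pow, Real.sq_sqrt zero_le_three]; ring,
    sq_eq_sq_iff_eq_or_eq_neg] at h
  rcases h with h | h
  · exact ⟨t, rfl, h⟩
  · exact ⟨-t, neg_sq t, by rw [h]; push_cast; ring⟩

section IntVec

theorem intVec_eq (v : Fin 3 → ℤ) :
    intVec v = (WithLp.equiv 2 (Fin 3 → ℝ)).symm ![(v 0 : ℝ), (v 1 : ℝ), (v 2 : ℝ)] := by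
  ext i
  fin_cases i <;> rfl

theorem intVec_sub (v w : Fin 3 → ℤ) : intVec v - intVec w = intVec (v - w) := by
  ext i
  simp [intVec]

theorem inner_intVec (x : EuclideanSpace ℝ (Fin 3)) (v : Fin 3 → ℤ) :
    inner ℝ x (intVec v) = x.ofLp ⬝ᵥ (Int.castRingHom ℝ ∘ v) := by
  rw [EuclideanSpace.inner_eq_star_dotProduct, star_trivial, dotProduct_comm]
  rfl

theorem dist_intVec_sq (v w : Fin 3 → ℤ) :
    dist (intVec v) (intVec w) ^ 2 = (((w - v) ⬝ᵥ (w - v) : ℤ) : ℝ) := by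
  rw [dist_comm, dist_eq_norm, intVec_sub, ← real_inner_self_eq_norm_sq, inner_intVec,
    ← eq_intCast (Int.castRingHom ℝ), RingHom.map_dotProduct]
  rfl

theorem sub_dotProduct_sub_eq_of_dist_intVec_eq {P Q P' Q' : Fin 3 → ℤ}
    (h : dist (intVec P) (intVec Q) = dist (intVec P') (intVec Q')) :
    (Q - P) ⬝ᵥ (Q - P) = (Q' - P') ⬝ᵥ (Q' - P') := by
  have h2 := congrArg (· ^ 2) h
  simp only [dist_intVec_sq] at h2
  exact_mod_cast h2

theorem exists_eq_inv_smul_intVec_cross_of_inner_eq_zero {n : EuclideanSpace ℝ (Fin 3)}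
    {u v : Fin 3 → ℤ} (hn : ‖n‖ = 1) (hnu : inner ℝ n (intVec u) = 0)
    (hnv : inner ℝ n (intVec v) = 0) (huv : u ⨯₃ v ≠ 0) :
    ∃ N : ℝ, N ^ 2 = ((u ⨯₃ v ⬝ᵥ u ⨯₃ v : ℤ) : ℝ) ∧ n = N⁻¹ • intVec (u ⨯₃ v) := by
  have hnn : n.ofLp ⬝ᵥ n.ofLp = 1 := by
    have h := real_inner_self_eq_norm_sq n
    rwa [hn, one_pow, EuclideanSpace.inner_eq_star_dotProduct, star_trivial] at h
  rw [inner_intVec] at hnu hnv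
  have h := dotProduct_cross_self_smul_eq _ _ _ hnu hnv
  rw [← RingHom.comp_cross] at h
  have hw : Int.castRingHom ℝ ∘ (u ⨯₃ v) ⬝ᵥ Int.castRingHom ℝ ∘ (u ⨯₃ v) ≠ 0 := by
    rw [← RingHom.map_dotProduct, eq_intCast, Int.cast_ne_zero]
    exact mt dotProduct_self_eq_zero.mp huv
  obtain ⟨hN, hm⟩ := eq_inv_smul_of_smul_eq h hnn hw
  refine ⟨_, by rw [hN, ← RingHom.map_dotProduct, eq_intCast], ?_⟩
  ext i
  exact congrFun hm i

end IntVec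

theorem unit_normal_of_integer_equilateral_triangle_general
    (A B C : Fin 3 → ℤ)
    (hAB : A ≠ B)
    (heq1 : dist (intVec A) (intVec B) = dist (intVec B) (intVec C))
    (heq2 : dist (intVec B) (intVec C) = dist (intVec C) (intVec A))
    (n : EuclideanSpace ℝ (Fin 3)) (hn : ‖n‖ = 1)
    (hn1 : (inner ℝ n (intVec B - intVec A) : ℝ) = 0)
    (hn2 : (inner ℝ n (intVec C - intVec A) : ℝ) = 0) :
    ∃ a b c d : ℤ, d ≠ 0 ∧ a ^ 2 + b ^ 2 + c ^ 2 = 3 * d ^ 2 ∧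
      n = (1 / ((d : ℝ) * Real.sqrt 3)) •
        ((WithLp.equiv 2 (Fin 3 → ℝ)).symm ![(a : ℝ), (b : ℝ), (c : ℝ)]) := by
  set u := B - A
  set v := C - A
  have h₁ : u ⬝ᵥ u = (v - u) ⬝ᵥ (v - u) := by
    rw [sub_sub_sub_cancel_right]
    exact sub_dotProduct_sub_eq_of_dist_intVec_eq heq1
  have h₂ : (v - u) ⬝ᵥ (v - u) = v ⬝ᵥ v := by
    rw [sub_sub_sub_cancel_right]
    exact sub_dotProduct_sub_eq_of_dist_intVec_eq (heq2.trans (dist_comm _ _))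
  have ht : u ⬝ᵥ v ≠ 0 :=
    dotProduct_ne_zero_of_sub_dotProduct_sub_eq (sub_ne_zero.mpr hAB.symm) h₂
  have hw := cross_dotProduct_cross_self_of_equilateral h₁ h₂
  have huv : u ⨯₃ v ≠ 0 := fun h => ht (by simpa [h] using hw)
  rw [intVec_sub] at hn1 hn2
  obtain ⟨N, hN, hn'⟩ := exists_eq_inv_smul_intVec_cross_of_inner_eq_zero hn hn1 hn2 huv
  obtain ⟨d, hd, rfl⟩ := exists_int_eq_mul_sqrt_three (by rw [hN, hw]; push_cast; rfl)
  refine ⟨(u ⨯₃ v) 0, (u ⨯₃ v) 1, (u ⨯₃ v) 2, d, ?_, ?_, ?_⟩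
  · rintro rfl
    exact ht (pow_eq_zero_iff two_ne_zero |>.mp (by simpa using hd.symm))
  · rw [hd, ← hw, vec3_dotProduct]
    ring
  · rw [hn', one_div, intVec_eq]

/-- Any unit normal vector to the plane of a nondegenerate equilateral triangle with
vertices in `ℤ³` has the form `(a,b,c)/(d√3)` with `a²+b²+c² = 3d²`, `d ≠ 0`. -/
theorem unit_normal_of_integer_equilateral_triangle
    (A B C : Fin 3 → ℤ)
    (hAB : A ≠ B) (hBC : B ≠ C) (hCA : C ≠ A)
    (heq1 : dist (intVec A) (intVec B) = dist (intVec B) (intVec C))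
    (heq2 : dist (intVec B) (intVec C) = dist (intVec C) (intVec A))
    (n : EuclideanSpace ℝ (Fin 3)) (hn : ‖n‖ = 1)
    (hn1 : (inner ℝ n (intVec B - intVec A) : ℝ) = 0)
    (hn2 : (inner ℝ n (intVec C - intVec A) : ℝ) = 0) :
    ∃ a b c d : ℤ, d ≠ 0 ∧ a ^ 2 + b ^ 2 + c ^ 2 = 3 * d ^ 2 ∧
      n = (1 / ((d : ℝ) * Real.sqrt 3)) •
        ((WithLp.equiv 2 (Fin 3 → ℝ)).symm ![(a : ℝ), (b : ℝ), (c : ℝ)]) :=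
  unit_normal_of_integer_equilateral_triangle_general A B C hAB heq1 heq2 n hn hn1 hn2
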